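/- arXiv:1903.00745 — 3 statements merged into one kernel-verified Lean document; each statement's English description precedes it below -/
import Mathlib

section
/- Let β be a type (of blocks) with functions height : β → ℕ, left : β → ℤ, size : β → ℤ, and relations T : β → ℤ → ℤ → Prop and O : β → β → ℤ → ℤ → Prop. Assume: (a) if T b x v then height b = 1, x = left b + v − 1, and 1 ≤ v ≤ size b; (b) if O b b' u v then height b = height b' + 1, left b + v = left b' + u, 1 ≤ v ≤ size b, and 1 ≤ u ≤ size b'. Let A : ℕ → β → ℤ → ℤ → Prop be the least family closed under: (1) if T b x v then A 1 b v x; (2) if A h b' u x and O b b' u v then A (h+1) b v x; (3) if A h b v x and v < size b then A h b (v+1) (x+1); (4) if A h b v x and 1 < v then A h b (v−1) (x−1). Then for all h, b, v, x, if A h b v x holds then h = height b, x = left b + v − 1, and 1 ≤ v ≤ size b. -/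
/-- Proposition 2 (soundness half): every derivable `above` fact `A h b v x`
gives the true height, horizontal position, and unit bounds of block `b`. -/
theorem above_soundness {β : Type*} (height : β → ℕ) (left size : β → ℤ)
    (T : β → ℤ → ℤ → Prop) (O : β → β → ℤ → ℤ → Prop)
    (hT : ∀ b x v, T b x v →
      height b = 1 ∧ x = left b + v - 1 ∧ 1 ≤ v ∧ v ≤ size b)
    (hO : ∀ b b' u v, O b b' u v →
      height b = height b' + 1 ∧ left b + v = left b' + u ∧
        1 ≤ v ∧ v ≤ size b ∧ 1 ≤ u ∧ u ≤ size b')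
    (A : ℕ → β → ℤ → ℤ → Prop)
    (rule1 : ∀ b x v, T b x v → A 1 b v x)
    (rule2 : ∀ h b b' u v x, A h b' u x → O b b' u v → A (h + 1) b v x)
    (rule3 : ∀ h b v x, A h b v x → v < size b → A h b (v + 1) (x + 1))
    (rule4 : ∀ h b v x, A h b v x → 1 < v → A h b (v - 1) (x - 1))
    (least : ∀ A' : ℕ → β → ℤ → ℤ → Prop,
      (∀ b x v, T b x v → A' 1 b v x) →
      (∀ h b b' u v x, A' h b' u x → O b b' u v → A' (h + 1) b v x) →
      (∀ h b v x, A' h b v x → v < size b → A' h b (v + 1) (x + 1)) →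
      (∀ h b v x, A' h b v x → 1 < v → A' h b (v - 1) (x - 1)) →
      ∀ h b v x, A h b v x → A' h b v x) :
    ∀ h b v x, A h b v x →
      h = height b ∧ x = left b + v - 1 ∧ 1 ≤ v ∧ v ≤ size b := by
  apply least (fun h b v x =>
    h = height b ∧ x = left b + v - 1 ∧ 1 ≤ v ∧ v ≤ size b)
  · intro b x v ht
    obtain ⟨h1, h2, h3, h4⟩ := hT b x v ht
    exact ⟨h1.symm, h2, h3, h4⟩
  · intro h b b' u v x ⟨ih1, ih2, ih3, ih4⟩ ho
    obtain ⟨h1, h2, h3, h4, h5, h6⟩ := hO b b' u v ho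
    refine ⟨by omega, by omega, h3, h4⟩
  · intro h b v x ⟨ih1, ih2, ih3, ih4⟩ hlt
    exact ⟨ih1, by omega, by omega, by omega⟩
  · intro h b v x ⟨ih1, ih2, ih3, ih4⟩ hlt
    exact ⟨ih1, by omega, by omega, by omega⟩
end

section
/- Let β be a type (of blocks) with functions height : β → ℕ, left : β → ℤ, size : β → ℤ, and relations T : β → ℤ → ℤ → Prop and O : β → β → ℤ → ℤ → Prop. Assume: (a) if T b x v then height b = 1, x = left b + v − 1, and 1 ≤ v ≤ size b; (b) if O b b' u v then height b = height b' + 1, left b + v = left b' + u, 1 ≤ v ≤ size b, and 1 ≤ u ≤ size b'. Let A : ℕ → β → ℤ → ℤ → Prop be the least family closed under: (1) if T b x v then A 1 b v x; (2) if A h b' u x and O b b' u v then A (h+1) b v x; (3) if A h b v x and v < size b then A h b (v+1) (x+1); (4) if A h b v x and 1 < v then A h b (v−1) (x−1). Let Grounded : β → Prop be the least predicate closed under: if T b x v for some x, v then Grounded b; and if O b b' u v for some u, v with Grounded b', then Grounded b. Then for every block b with Grounded b and every v : ℤ with 1 ≤ v ≤ size b, A (height b) b v (left b + v − 1) holds.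 -/
/-- Proposition 2 (completeness half): for every grounded block `b` and every
valid unit `v` of `b`, the `above` fact `A (height b) b v (left b + v - 1)` is derivable. -/
theorem above_completeness {β : Type*} (height : β → ℕ) (left size : β → ℤ)
    (T : β → ℤ → ℤ → Prop) (O : β → β → ℤ → ℤ → Prop)
    (hT : ∀ b x v, T b x v →
      height b = 1 ∧ x = left b + v - 1 ∧ 1 ≤ v ∧ v ≤ size b)
    (hO : ∀ b b' u v, O b b' u v →
      height b = height b' + 1 ∧ left b + v = left b' + u ∧
        1 ≤ v ∧ v ≤ size b ∧ 1 ≤ u ∧ u ≤ size b')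
    (A : ℕ → β → ℤ → ℤ → Prop)
    (rule1 : ∀ b x v, T b x v → A 1 b v x)
    (rule2 : ∀ h b b' u v x, A h b' u x → O b b' u v → A (h + 1) b v x)
    (rule3 : ∀ h b v x, A h b v x → v < size b → A h b (v + 1) (x + 1))
    (rule4 : ∀ h b v x, A h b v x → 1 < v → A h b (v - 1) (x - 1))
    (Aleast : ∀ A' : ℕ → β → ℤ → ℤ → Prop,
      (∀ b x v, T b x v → A' 1 b v x) →
      (∀ h b b' u v x, A' h b' u x → O b b' u v → A' (h + 1) b v x) →
      (∀ h b v x, A' h b v x → v < size b → A' h b (v + 1) (x + 1)) →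
      (∀ h b v x, A' h b v x → 1 < v → A' h b (v - 1) (x - 1)) →
      ∀ h b v x, A h b v x → A' h b v x)
    (Grounded : β → Prop)
    (gbase : ∀ b x v, T b x v → Grounded b)
    (gstep : ∀ b b' u v, O b b' u v → Grounded b' → Grounded b)
    (gleast : ∀ G : β → Prop,
      (∀ b x v, T b x v → G b) →
      (∀ b b' u v, O b b' u v → G b' → G b) →
      ∀ b, Grounded b → G b) :
    ∀ b, Grounded b → ∀ v : ℤ, 1 ≤ v → v ≤ size b →
      A (height b) b v (left b + v - 1) := by
  -- spread lemma: from one valid position, all valid positions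
  have spread : ∀ (h : ℕ) (b : β) (v₀ : ℤ), 1 ≤ v₀ → v₀ ≤ size b →
      A h b v₀ (left b + v₀ - 1) →
      ∀ v : ℤ, 1 ≤ v → v ≤ size b → A h b v (left b + v - 1) := by
    intro h b v₀ hv₀1 hv₀s hA v hv1 hvs
    rcases le_total v₀ v with hle | hle
    · -- go upward from v₀ to v
      have up : ∀ n : ℕ, ∀ w : ℤ, w ≤ size b → w = v₀ + n → A h b w (left b + w - 1) := by
        intro n
        induction n with
        | zero => intro w _ hwv; simp at hwv; subst hwv; exact hA
        | succ n ih =>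
          intro w hws hwv
          have hwlt : w - 1 < size b := by omega
          have h3' := rule3 h b (w - 1) (left b + (w - 1) - 1)
            (ih (w - 1) (by omega) (by push_cast at hwv ⊢; omega)) hwlt
          have e1 : w - 1 + 1 = w := by ring
          have e2 : left b + (w - 1) - 1 + 1 = left b + w - 1 := by ring
          rwa [e1, e2] at h3'
      exact up (v - v₀).toNat v hvs (by omega)
    · -- go downward from v₀ to v
      have down : ∀ n : ℕ, ∀ w : ℤ, 1 ≤ w → w + n = v₀ → A h b w (left b + w - 1) := by
        intro n
        induction n with
        | zero => intro w hw1 hwv; simp at hwv; subst hwv; exact hA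
        | succ n ih =>
          intro w hw1 hwv
          have hgt : 1 < w + 1 := by omega
          have h4' := rule4 h b (w + 1) (left b + (w + 1) - 1)
            (ih (w + 1) (by omega) (by push_cast at hwv ⊢; omega)) hgt
          have e1 : w + 1 - 1 = w := by ring
          have e2 : left b + (w + 1) - 1 - 1 = left b + w - 1 := by ring
          rwa [e1, e2] at h4'
      exact down (v₀ - v).toNat v hv1 (by omega)
  refine gleast (fun b => ∀ v : ℤ, 1 ≤ v → v ≤ size b →
      A (height b) b v (left b + v - 1)) ?_ ?_
  · intro b x v₀ hTb v hv1 hvs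
    obtain ⟨hh, hx, h1, h2⟩ := hT b x v₀ hTb
    rw [hh]
    exact spread 1 b v₀ h1 h2 (hx ▸ rule1 b x v₀ hTb) v hv1 hvs
  · intro b b' u v₀ hOb ih v hv1 hvs
    obtain ⟨hh, hx, h1, h2, h3, h4⟩ := hO b b' u v₀ hOb
    have hA' := ih u h3 h4
    have hA0 : A (height b' + 1) b v₀ (left b' + u - 1) :=
      rule2 (height b') b b' u v₀ (left b' + u - 1) hA' hOb
    rw [hh]
    exact spread (height b' + 1) b v₀ h1 h2 (show left b + v₀ - 1 = left b' + u - 1 by omega ▸ hA0) v hv1 hvs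
end

section
/- Let sb, sl, u₀, v₀ : ℤ with 1 ≤ v₀ ≤ sb and 1 ≤ u₀ ≤ sl. Let Q ⊆ ℤ × ℤ be the least set containing (u₀, v₀) and closed under the rules: (i) if (u, v) ∈ Q, u < sl, and v < sb, then (u+1, v+1) ∈ Q; (ii) if (u, v) ∈ Q, 1 < u, and 1 < v, then (u−1, v−1) ∈ Q. Then Q = {(u, v) : ℤ × ℤ | 1 ≤ u ≤ sl ∧ 1 ≤ v ≤ sb ∧ u − u₀ = v − v₀}. -/
/-- Ramification rules for placing a longer box on another box: the least set `Q`
containing `(u₀, v₀)` and closed under the two diagonal shift rules equals the set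
of valid unit pairs with the same offset. -/
theorem ramification_characterization (sb sl u₀ v₀ : ℤ)
    (hv₀ : 1 ≤ v₀) (hv₀sb : v₀ ≤ sb) (hu₀ : 1 ≤ u₀) (hu₀sl : u₀ ≤ sl)
    (Q : Set (ℤ × ℤ))
    (base : (u₀, v₀) ∈ Q)
    (rule1 : ∀ u v : ℤ, (u, v) ∈ Q → u < sl → v < sb → (u + 1, v + 1) ∈ Q)
    (rule2 : ∀ u v : ℤ, (u, v) ∈ Q → 1 < u → 1 < v → (u - 1, v - 1) ∈ Q)
    (least : ∀ P : Set (ℤ × ℤ), (u₀, v₀) ∈ P →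
      (∀ u v : ℤ, (u, v) ∈ P → u < sl → v < sb → (u + 1, v + 1) ∈ P) →
      (∀ u v : ℤ, (u, v) ∈ P → 1 < u → 1 < v → (u - 1, v - 1) ∈ P) →
      Q ⊆ P) :
    Q = {p : ℤ × ℤ | 1 ≤ p.1 ∧ p.1 ≤ sl ∧ 1 ≤ p.2 ∧ p.2 ≤ sb ∧ p.1 - u₀ = p.2 - v₀} := by
  apply Set.Subset.antisymm
  · apply least
    · exact ⟨hu₀, hu₀sl, hv₀, hv₀sb, by ring⟩
    · rintro u v ⟨h1, h2, h3, h4, h5⟩ hu hv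
      exact ⟨by omega, by omega, by omega, by omega, by simp only at h5 ⊢; omega⟩
    · rintro u v ⟨h1, h2, h3, h4, h5⟩ hu hv
      exact ⟨by omega, by omega, by omega, by omega, by simp only at h5 ⊢; omega⟩
  · have pos : ∀ n : ℕ, u₀ + n ≤ sl → v₀ + n ≤ sb → (u₀ + (n : ℤ), v₀ + (n : ℤ)) ∈ Q := by
      intro n
      induction n with
      | zero => intro _ _; simpa using base
      | succ k ih =>
        intro h1 h2
        push_cast at h1 h2 ⊢
        have := rule1 (u₀ + k) (v₀ + k) (ih (by omega) (by omega)) (by omega) (by omega)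
        convert this using 2 <;> ring
    have neg : ∀ n : ℕ, 1 ≤ u₀ - n → 1 ≤ v₀ - n → (u₀ - (n : ℤ), v₀ - (n : ℤ)) ∈ Q := by
      intro n
      induction n with
      | zero => intro _ _; simpa using base
      | succ k ih =>
        intro h1 h2
        push_cast at h1 h2 ⊢
        have := rule2 (u₀ - k) (v₀ - k) (ih (by omega) (by omega)) (by omega) (by omega)
        convert this using 2 <;> ring
    rintro ⟨u, v⟩ ⟨h1, h2, h3, h4, h5⟩
    simp only at h1 h2 h3 h4 h5
    rcases le_or_gt u₀ u with h | h
    · obtain ⟨n, hn⟩ := Int.eq_ofNat_of_zero_le (sub_nonneg.2 h)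
      have hv : v = v₀ + n := by omega
      have := pos n (by omega) (by omega)
      have hu : u = u₀ + n := by omega
      rw [hu, hv]; exact this
    · obtain ⟨n, hn⟩ := Int.eq_ofNat_of_zero_le (sub_nonneg.2 h.le)
      have := neg n (by omega) (by omega)
      have hu : u = u₀ - n := by omega
      have hv : v = v₀ - n := by omega
      rw [hu, hv]; exact this
end
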